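/- The quotient of Ł_{n,k} by its radical (the intersection of its maximal filters) is isomorphic to the finite chain Ł_n; that is, Ł_{n,k} has rank n. -/

import Mathlib

/-- The interval `[0, u]` in a totally ordered abelian group: the universe of
the Wajsberg hoop `Γ(G, u)`. -/
def Gam {G : Type*} [AddCommGroup G] [LinearOrder G] [IsOrderedAddMonoid G] (u : G) : Type _ :=
  {x : G // 0 ≤ x ∧ x ≤ u}

/-- Product `a·b = max(a+b-u, 0)` of `Γ(G,u)`. -/
def hmul {G : Type*} [AddCommGroup G] [LinearOrder G] [IsOrderedAddMonoid G] {u : G} (a b : Gam u) : Gam u :=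
  ⟨max (a.1 + b.1 - u) 0, le_max_right _ _,
    max_le (sub_le_iff_le_add.mpr (add_le_add a.2.2 b.2.2)) (a.2.1.trans a.2.2)⟩

/-- Residuum `a→b = min(u-a+b, u)` of `Γ(G,u)`. -/
def himp {G : Type*} [AddCommGroup G] [LinearOrder G] [IsOrderedAddMonoid G] {u : G} (a b : Gam u) : Gam u :=
  ⟨min (u - a.1 + b.1) u,
    le_min (add_nonneg (sub_nonneg.mpr a.2.2) b.2.1) (a.2.1.trans a.2.2),
    min_le_right _ _⟩

/-- Top element (monoid unit) of `Γ(G,u)`. -/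
def hone {G : Type*} [AddCommGroup G] [LinearOrder G] [IsOrderedAddMonoid G] (u : G) (hu : 0 ≤ u) : Gam u :=
  ⟨u, hu, le_rfl⟩

theorem lex_nonneg (a b : ℤ) (h : 0 < a) : (0 : ℤ ×ₗ ℤ) ≤ toLex (a, b) :=
  Prod.Lex.le_iff.mpr (Or.inl h)

/-- A filter of `Γ(G,u)`: contains the top, is upward closed, and is closed under
the monoid product. -/
def GFilter {G : Type*} [AddCommGroup G] [LinearOrder G] [IsOrderedAddMonoid G] {u : G} (hu : 0 ≤ u)
    (F : Set (Gam u)) : Prop :=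
  hone u hu ∈ F ∧ (∀ a b : Gam u, a ∈ F → a.1 ≤ b.1 → b ∈ F) ∧
    (∀ a b : Gam u, a ∈ F → b ∈ F → hmul a b ∈ F)

/-- A maximal (proper) filter of `Γ(G,u)`. -/
def GMaxFilter {G : Type*} [AddCommGroup G] [LinearOrder G] [IsOrderedAddMonoid G] {u : G} (hu : 0 ≤ u)
    (F : Set (Gam u)) : Prop :=
  GFilter hu F ∧ F ≠ Set.univ ∧
    ∀ F', GFilter hu F' → F ⊆ F' → F' = F ∨ F' = Set.univ

/-- The radical of `Γ(G,u)`: the intersection of its maximal proper filters. -/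
def GRad {G : Type*} [AddCommGroup G] [LinearOrder G] [IsOrderedAddMonoid G] {u : G} (hu : 0 ≤ u) : Set (Gam u) :=
  {x | ∀ F, GMaxFilter hu F → x ∈ F}

/-!
The first-coordinate projection `Γ(ℤ ×ₗ H, (n, h)) → Γ(ℤ, n) = Ł_n` is a hoop homomorphism
onto `Ł_n`. Squaring an element `c` with first coordinate `x < n` yields first coordinate
`max (2x - n) 0`, which is smaller than `x` unless `c * c = 0`; so a filter containing such
an element contains `0` and is improper. Hence the preimage `{a | a₁ = n}` of the top is the
unique maximal filter, i.e. the radical, and the radical congruence is the kernel of the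
projection.
-/

open Function OrderAddMonoidHom

namespace Gam

section Functorial

variable {G G' : Type*} [AddCommGroup G] [LinearOrder G] [IsOrderedAddMonoid G]
  [AddCommGroup G'] [LinearOrder G'] [IsOrderedAddMonoid G'] {u : G}

lemma ext_iff {a b : Gam u} : a = b ↔ a.1 = b.1 := Subtype.ext_iff

def bot (hu : 0 ≤ u) : Gam u := ⟨0, le_rfl, hu⟩

lemma himp_val_eq_iff {a b : Gam u} : (himp a b).1 = u ↔ a.1 ≤ b.1 := by
  simp [_root_.himp, sub_add_eq_add_sub, le_sub_iff_add_le]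

def map (f : G →+o G') (a : Gam u) : Gam (f u) :=
  ⟨f a.1, map_zero f ▸ OrderHomClass.mono f a.2.1, OrderHomClass.mono f a.2.2⟩

lemma map_hmul (f : G →+o G') (a b : Gam u) : map f (hmul a b) = hmul (map f a) (map f b) :=
  Subtype.ext <| by simp [map, hmul, (OrderHomClass.mono f).map_max]

lemma map_himp (f : G →+o G') (a b : Gam u) : map f (himp a b) = himp (map f a) (map f b) :=
  Subtype.ext <| by simp [map, _root_.himp, (OrderHomClass.mono f).map_min]

end Functorial

section Lex

variable {H : Type*} [AddCommGroup H] [LinearOrder H] [IsOrderedAddMonoid H] {n : ℤ} {h : H}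

noncomputable def fst (a : Gam (toLex (n, h))) : Gam n := map (fstₗ ℤ H) a

lemma fst_hmul (a b : Gam (toLex (n, h))) : fst (hmul a b) = hmul (fst a) (fst b) :=
  map_hmul _ a b

lemma fst_himp (a b : Gam (toLex (n, h))) : fst (himp a b) = himp (fst a) (fst b) :=
  map_himp _ a b

lemma fst_le_fst {a b : Gam (toLex (n, h))} (hab : a.1 ≤ b.1) : (fst a).1 ≤ (fst b).1 :=
  Prod.Lex.monotone_fst _ _ hab

lemma fst_surjective (hn : 0 < n) : Surjective (fst : Gam (toLex (n, h)) → Gam n) := by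
  rintro ⟨x, hx0, hxn⟩
  rcases hxn.lt_or_eq with hlt | rfl
  · refine ⟨⟨toLex (x, 0), ?_, Prod.Lex.toLex_le_toLex.2 (Or.inl hlt)⟩, rfl⟩
    exact Prod.Lex.toLex_le_toLex.2 (hx0.lt_or_eq.imp id fun hx => ⟨hx, le_rfl⟩)
  · exact ⟨hone _ (Prod.Lex.toLex_le_toLex.2 (Or.inl hn)), rfl⟩

def fstKer (n : ℤ) (h : H) : Set (Gam (toLex (n, h))) := {a | (fst a).1 = n}

lemma himp_mem_fstKer_iff {a b : Gam (toLex (n, h))} :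
    himp a b ∈ fstKer n h ↔ (fst a).1 ≤ (fst b).1 := by
  show (fst (himp a b)).1 = n ↔ _
  rw [fst_himp]
  exact himp_val_eq_iff

lemma gFilter_fstKer (hu : 0 ≤ toLex (n, h)) : GFilter hu (fstKer n h) := by
  have hn : 0 ≤ n := Prod.Lex.monotone_fst _ _ hu
  refine ⟨rfl, fun a b (ha : (fst a).1 = n) hab => ?_,
    fun a b (ha : (fst a).1 = n) (hb : (fst b).1 = n) => ?_⟩
  · exact le_antisymm (fst b).2.2 (ha.symm.le.trans (fst_le_fst hab))
  · show (fst (hmul a b)).1 = n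
    rw [fst_hmul]
    simp [hmul, ha, hb, hn]

lemma bot_notMem_fstKer (hn : 0 < n) (hu : 0 ≤ toLex (n, h)) : bot hu ∉ fstKer n h :=
  hn.ne

lemma hmul_self_eq_bot {hu : 0 ≤ toLex (n, h)} {c : Gam (toLex (n, h))}
    (hc : 2 * (fst c).1 < n) : hmul c c = bot hu := by
  refine Subtype.ext <| max_eq_right <| le_of_lt <| Prod.Lex.lt_iff.2 <| Or.inl ?_
  change (fst c).1 + (fst c).1 - n < 0
  omega

lemma _root_.GFilter.bot_mem_of_fst_lt {hu : 0 ≤ toLex (n, h)} {F : Set (Gam (toLex (n, h)))}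
    (hF : GFilter hu F) {c : Gam (toLex (n, h))} (hc : c ∈ F) (hlt : (fst c).1 < n) :
    bot hu ∈ F := by
  have hcc : hmul c c ∈ F := hF.2.2 c c hc hc
  by_cases hsmall : 2 * (fst c).1 < n
  · exact hmul_self_eq_bot hsmall ▸ hcc
  · have hfst : (fst (hmul c c)).1 = 2 * (fst c).1 - n := by
      rw [fst_hmul]
      simp only [hmul]
      omega
    exact hF.bot_mem_of_fst_lt hcc (by omega)
termination_by (fst c).1.toNat
decreasing_by omega

lemma _root_.GFilter.subset_fstKer {hu : 0 ≤ toLex (n, h)} {F : Set (Gam (toLex (n, h)))}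
    (hF : GFilter hu F) (hne : F ≠ Set.univ) : F ⊆ fstKer n h := by
  intro c hc
  by_contra hcn
  exact hne <| Set.eq_univ_of_forall fun a =>
    hF.2.1 _ a (hF.bot_mem_of_fst_lt hc (lt_of_le_of_ne (fst c).2.2 hcn)) a.2.1

lemma gMaxFilter_fstKer (hn : 0 < n) (hu : 0 ≤ toLex (n, h)) : GMaxFilter hu (fstKer n h) := by
  refine ⟨gFilter_fstKer hu, fun huniv => bot_notMem_fstKer hn hu (huniv ▸ Set.mem_univ _),
    fun F hF hsub => ?_⟩
  by_cases hne : F = Set.univ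
  · exact Or.inr hne
  · exact Or.inl ((hF.subset_fstKer hne).antisymm hsub)

lemma _root_.GMaxFilter.eq_fstKer (hn : 0 < n) {hu : 0 ≤ toLex (n, h)}
    {F : Set (Gam (toLex (n, h)))} (hF : GMaxFilter hu F) : F = fstKer n h :=
  ((hF.2.2 _ (gFilter_fstKer hu) (hF.1.subset_fstKer hF.2.1)).resolve_right
    (gMaxFilter_fstKer hn hu).2.1).symm

lemma gRad_eq_fstKer (hn : 0 < n) (hu : 0 ≤ toLex (n, h)) : GRad hu = fstKer n h :=
  Set.ext fun _ => ⟨fun ha => ha _ (gMaxFilter_fstKer hn hu),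
    fun ha _ hF => (hF.eq_fstKer hn).symm ▸ ha⟩

end Lex

end Gam

/-- the quotient of `Ł_{n,k}` by (the congruence associated with) its
radical is isomorphic to the finite chain `Ł_n`; i.e. `Ł_{n,k}` has rank `n`.  The
isomorphism is witnessed by a surjection `q` onto `Ł_n` whose kernel is exactly the
radical congruence `a ∼ b ↔ a→b ∈ Rad ∧ b→a ∈ Rad`, and which preserves the
operations. -/
theorem Lnk_rank_n (n k : ℕ) (hn : 1 ≤ n) :
    ∃ q : Gam (toLex ((n : ℤ), (k : ℤ))) → Gam ((n : ℤ)),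
      Function.Surjective q ∧
      (∀ a b, q a = q b ↔
        (himp a b ∈ GRad (lex_nonneg _ _ (by exact_mod_cast hn)) ∧
         himp b a ∈ GRad (lex_nonneg _ _ (by exact_mod_cast hn)))) ∧
      q (hone _ (lex_nonneg _ _ (by exact_mod_cast hn))) = hone _ (Int.natCast_nonneg n) ∧
      (∀ a b, q (hmul a b) = hmul (q a) (q b)) ∧
      (∀ a b, q (himp a b) = himp (q a) (q b)) := by
  have hn₀ : (0 : ℤ) < n := by exact_mod_cast hn
  refine ⟨Gam.fst, Gam.fst_surjective hn₀, fun a b => ?_, rfl, Gam.fst_hmul, Gam.fst_himp⟩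
  rw [Gam.gRad_eq_fstKer hn₀, Gam.himp_mem_fstKer_iff, Gam.himp_mem_fstKer_iff,
    ← le_antisymm_iff, Gam.ext_iff]
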